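/- arXiv:math/0104213 — 3 statements merged into one kernel-verified Lean document; each statement's English description precedes it below -/
import Mathlib

section
/- A skew-symmetric n×n complex matrix M has rank at most 2s if and only if there exist vectors w₁,…,w_n ∈ ℂ^{2s} with M_{jk} = ω(wⱼ, wₖ) for all j,k, where ω is the standard complex symplectic form on ℂ^{2s}. -/
open Matrix Module

private lemma stmt9_hard {n : ℕ} : ∀ (s : ℕ) (M : Matrix (Fin n) (Fin n) ℂ), Mᵀ = -M → M.rank ≤ 2 * s →
    ∃ w : Fin n → (Fin s ⊕ Fin s → ℂ), ∀ j k,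
      M j k = ∑ a : Fin s,
        (w j (Sum.inl a) * w k (Sum.inr a) - w j (Sum.inr a) * w k (Sum.inl a)) := by
  intro s
  induction s with
  | zero =>
    intro M hM hr
    have h0 : M = 0 := by
      have hb : LinearMap.range M.mulVecLin = ⊥ := by
        rw [← Submodule.finrank_eq_zero (R := ℂ)]
        simpa [Matrix.rank] using hr
      have h2 : M.mulVecLin = 0 := LinearMap.range_eq_bot.mp hb
      ext p q
      have := congrFun (congrFun (congrArg DFunLike.coe h2) (Pi.single q 1)) p
      simpa [Matrix.mulVecLin_apply, Matrix.mulVec_single] using this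
    exact ⟨0, fun j k => by simp [h0]⟩
  | succ s IH =>
    intro M hM hr
    by_cases h0 : M = 0
    · exact ⟨0, fun j k => by simp [h0]⟩
    obtain ⟨j, k, hjk⟩ : ∃ j k, M j k ≠ 0 := by
      by_contra h; push_neg at h; exact h0 (Matrix.ext fun j k => h j k)
    have skew : ∀ p q, M q p = -M p q := fun p q => by
      simpa using congrFun (congrFun hM p) q
    have hdiag : ∀ p, M p p = 0 := fun p => add_self_eq_zero.mp (by linear_combination skew p p)
    set c := M j k with hc
    set u : Fin n → ℂ := fun p => -(M p k) / c with hu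
    set v : Fin n → ℂ := fun p => M p j with hv
    set C : Matrix (Fin n) (Fin n) ℂ := Matrix.of fun p q => u p * v q - v p * u q with hC
    set N : Matrix (Fin n) (Fin n) ℂ := M - C with hNdef
    have huval : ∀ p, u p = -(M p k) / c := fun p => rfl
    have hvval : ∀ p, v p = M p j := fun p => rfl
    have hCval : ∀ p q, C p q = u p * v q - v p * u q := fun p q => rfl
    have hNval : ∀ p q, N p q = M p q - (u p * v q - v p * u q) := fun p q => rfl
    have huj : u j = -1 := by show -c / c = -1; rw [neg_div, div_self hjk]
    have huk : u k = 0 := by show -(M k k) / c = 0; rw [hdiag k]; simp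
    have hvj : v j = 0 := hdiag j
    have hvk : v k = -c := skew j k
    have hNrowj : ∀ q, N j q = 0 := by
      intro q
      rw [hNval, huj, hvj, hvval]
      linear_combination skew j q
    have hNrowk : ∀ q, N k q = 0 := by
      intro q
      rw [hNval, huk, hvk, huval]
      have h1 : M q k = -M k q := skew k q
      field_simp
      linear_combination h1
    have hNskew : Nᵀ = -N := by
      ext p q
      rw [Matrix.transpose_apply, Matrix.neg_apply, hNval q p, hNval p q]
      linear_combination skew p q
    have humem : u ∈ LinearMap.range M.mulVecLin := by
      refine ⟨Pi.single k (-1/c), ?_⟩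
      ext p
      rw [Matrix.mulVecLin_apply, huval]
      simp [Matrix.mulVec_single]
      ring
    have hvmem : v ∈ LinearMap.range M.mulVecLin := by
      refine ⟨Pi.single j 1, ?_⟩
      ext p
      rw [Matrix.mulVecLin_apply, hvval]
      simp [Matrix.mulVec_single]
    set ck : Fin n → ℂ := fun p => M p k with hck
    have hckval : ∀ p, ck p = M p k := fun p => rfl
    have hckmem : ck ∈ LinearMap.range M.mulVecLin := by
      refine ⟨Pi.single k 1, ?_⟩
      ext p
      rw [Matrix.mulVecLin_apply, hckval]
      simp [Matrix.mulVec_single]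
    set W := LinearMap.range N.mulVecLin with hW
    set S : Submodule ℂ (Fin n → ℂ) := Submodule.span ℂ {v, ck} with hS
    have hCmul : ∀ y : Fin n → ℂ, C *ᵥ y = (v ⬝ᵥ y) • u - (u ⬝ᵥ y) • v := by
      intro y
      ext p
      simp only [Matrix.mulVec, dotProduct, hCval, Pi.sub_apply, Pi.smul_apply,
        smul_eq_mul, sub_mul, Finset.sum_sub_distrib, Finset.sum_mul]
      congr 1 <;> exact Finset.sum_congr rfl fun x _ => by ring
    have hWle : W ≤ LinearMap.range M.mulVecLin := by
      rintro x ⟨y, rfl⟩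
      have : N.mulVecLin y = M *ᵥ y - ((v ⬝ᵥ y) • u - (u ⬝ᵥ y) • v) := by
        rw [Matrix.mulVecLin_apply, hNdef, Matrix.sub_mulVec, hCmul y]
      rw [this]
      exact sub_mem ⟨y, rfl⟩ (sub_mem (Submodule.smul_mem _ _ humem) (Submodule.smul_mem _ _ hvmem))
    have hWvanish : ∀ x ∈ W, x j = 0 ∧ x k = 0 := by
      rintro x ⟨y, rfl⟩
      constructor
      · simp [Matrix.mulVecLin_apply, Matrix.mulVec, dotProduct, hNrowj]
      · simp [Matrix.mulVecLin_apply, Matrix.mulVec, dotProduct, hNrowk]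
    have hinf : W ⊓ S = ⊥ := by
      rw [eq_bot_iff]
      rintro x ⟨hxW, hxS⟩
      obtain ⟨hxj, hxk⟩ := hWvanish x hxW
      obtain ⟨a, b, hab⟩ := Submodule.mem_span_pair.mp hxS
      have h1 : a * v j + b * ck j = 0 := by rw [← hxj, ← hab]; simp
      have h2 : a * v k + b * ck k = 0 := by rw [← hxk, ← hab]; simp
      rw [hvj, hckval] at h1
      rw [hvk, hckval, hdiag k] at h2
      simp at h1 h2
      have hb : b = 0 := by rcases h1 with h | h; exact h; exact absurd h hjk
      have ha : a = 0 := by rcases h2 with h | h; exact h; exact absurd h hjk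
      simp [← hab, ha, hb]
    have hindep : LinearIndependent ℂ ![v, ck] := by
      rw [LinearIndependent.pair_iff]
      intro a b hab
      have h1 : a * v j + b * ck j = 0 := by
        have := congrFun hab j; simpa using this
      have h2 : a * v k + b * ck k = 0 := by
        have := congrFun hab k; simpa using this
      rw [hvj, hckval] at h1
      rw [hvk, hckval, hdiag k] at h2
      simp at h1 h2
      constructor
      · rcases h2 with h | h; exact h; exact absurd h hjk
      · rcases h1 with h | h; exact h; exact absurd h hjk
    have hSrank : finrank ℂ S = 2 := by
      have hrange : Set.range ![v, ck] = {v, ck} := by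
        ext x
        simp [Fin.exists_fin_two]
        tauto
      rw [hS, ← hrange, finrank_span_eq_card hindep]
      simp
    have hNrank : N.rank ≤ 2 * s := by
      have hsup : W ⊔ S ≤ LinearMap.range M.mulVecLin := by
        refine sup_le hWle ?_
        rw [hS, Submodule.span_le]
        rintro x hx
        simp only [Set.mem_insert_iff, Set.mem_singleton_iff] at hx
        rcases hx with rfl | rfl
        · exact hvmem
        · exact hckmem
      have heq := Submodule.finrank_sup_add_finrank_inf_eq W S
      rw [hinf, hSrank] at heq
      simp only [finrank_bot, add_zero] at heq
      have hle : finrank ℂ ↥(W ⊔ S) ≤ finrank ℂ ↥(LinearMap.range M.mulVecLin) :=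
        Submodule.finrank_mono hsup
      have hMrank : finrank ℂ ↥(LinearMap.range M.mulVecLin) = M.rank := rfl
      have hNr : N.rank = finrank ℂ ↥W := rfl
      omega
    obtain ⟨w', hw'⟩ := IH N hNskew hNrank
    refine ⟨fun p => Sum.elim
      (fun a => Fin.lastCases (u p) (fun a' => w' p (Sum.inl a')) a)
      (fun a => Fin.lastCases (v p) (fun a' => w' p (Sum.inr a')) a), fun p q => ?_⟩
    rw [Fin.sum_univ_castSucc]
    simp only [Sum.elim_inl, Sum.elim_inr, Fin.lastCases_castSucc, Fin.lastCases_last]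
    rw [← hw' p q, hNval p q]
    ring

theorem stmt_9 {n s : ℕ} (M : Matrix (Fin n) (Fin n) ℂ) (hM : Mᵀ = -M) :
    M.rank ≤ 2 * s ↔
      ∃ w : Fin n → (Fin s ⊕ Fin s → ℂ), ∀ j k,
        M j k = ∑ a : Fin s,
          (w j (Sum.inl a) * w k (Sum.inr a) - w j (Sum.inr a) * w k (Sum.inl a)) := by
  constructor
  · exact stmt9_hard s M hM
  · rintro ⟨w, hw⟩
    set A : Matrix (Fin n) (Fin s ⊕ Fin s) ℂ := fun p i => w p i with hA
    set B : Matrix (Fin n) (Fin s ⊕ Fin s) ℂ :=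
      fun p i => Sum.elim (fun a => w p (Sum.inr a)) (fun a => -w p (Sum.inl a)) i with hB
    have hMAB : M = A * Bᵀ := by
      ext p q
      rw [hw p q]
      simp [Matrix.mul_apply, hA, hB, Fintype.sum_sum_type, mul_comm, mul_sub, sub_eq_add_neg]
      erw [Matrix.mul_apply]
      simp [Fintype.sum_sum_type, mul_comm]
      rw [Finset.sum_add_distrib]
      congr 1 <;> refine Finset.sum_congr rfl fun x _ => ?_ <;>
        simp only [Matrix.transpose, Matrix.of_apply, Sum.elim_inl, Sum.elim_inr] <;> ring
    calc M.rank = (A * Bᵀ).rank := by rw [hMAB]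
      _ ≤ A.rank := Matrix.rank_mul_le_left A Bᵀ
      _ ≤ Fintype.card (Fin s ⊕ Fin s) := Matrix.rank_le_card_width A
      _ = 2 * s := by simp [two_mul]
end

section
/- Let ε > 0. A matrix X = [[a,b],[c,−a]] ∈ sl(2,ℝ) is conjugate under SL(2,ℝ) to [[0,ε],[−ε,0]] if and only if det(X) = ε² (equivalently a² + bc = −ε²) and b > c. -/
theorem stmt_14 (ε a b c : ℝ) (hε : 0 < ε) :
    (∃ g : Matrix (Fin 2) (Fin 2) ℝ, g.det = 1 ∧
        !![a, b; c, -a] = g * !![0, ε; -ε, 0] * g⁻¹) ↔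
      ((!![a, b; c, -a] : Matrix (Fin 2) (Fin 2) ℝ).det = ε ^ 2 ∧ c < b) := by
  constructor
  · rintro ⟨g, hg, hX⟩
    have hg0 : IsUnit g.det := by rw [hg]; exact isUnit_one
    have hJ : (!![0, ε; -ε, 0] : Matrix (Fin 2) (Fin 2) ℝ).det = ε ^ 2 := by
      simp [Matrix.det_fin_two_of]; ring
    constructor
    · rw [hX, Matrix.det_mul, Matrix.det_mul, Matrix.det_nonsing_inv, hg, hJ]
      simp
    · have hXg : !![a, b; c, -a] * g = g * !![0, ε; -ε, 0] := by
        rw [hX, Matrix.mul_assoc, Matrix.nonsing_inv_mul g hg0, Matrix.mul_one]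
      have hdet : g 0 0 * g 1 1 - g 0 1 * g 1 0 = 1 := by
        rw [← Matrix.det_fin_two, hg]
      have e00 := congrFun (congrFun hXg 0) 0
      have e01 := congrFun (congrFun hXg 0) 1
      have e10 := congrFun (congrFun hXg 1) 0
      have e11 := congrFun (congrFun hXg 1) 1
      simp [Matrix.mul_apply, Fin.sum_univ_two] at e00 e01 e10 e11
      have hb : b * (g 0 0 * g 1 1 - g 0 1 * g 1 0)
          = ε * ((g 0 0) ^ 2 + (g 0 1) ^ 2) := by
        linear_combination g 0 0 * e01 - g 0 1 * e00
      have hc : c * (g 0 0 * g 1 1 - g 0 1 * g 1 0)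
          = -ε * ((g 1 0) ^ 2 + (g 1 1) ^ 2) := by
        linear_combination g 1 1 * e10 - g 1 0 * e11
      rw [hdet, mul_one] at hb hc
      nlinarith [sq_nonneg (g 0 0 - g 1 1), sq_nonneg (g 0 1 + g 1 0)]
  · rintro ⟨hdet, hcb⟩
    have hdet' : -(a * a) - b * c = ε ^ 2 := by
      simpa [Matrix.det_fin_two_of] using hdet
    have hc : c < 0 := by nlinarith
    have hεne : ε ≠ 0 := ne_of_gt hε
    have hcne : c ≠ 0 := ne_of_lt hc
    have hpos : 0 < ε / (-c) := div_pos hε (by linarith)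
    obtain ⟨v, hvv⟩ : ∃ v : ℝ, v ^ 2 * (-c) = ε :=
      ⟨Real.sqrt (ε / (-c)), by rw [Real.sq_sqrt hpos.le]; field_simp⟩
    set g : Matrix (Fin 2) (Fin 2) ℝ := !![v, -a * v / ε; 0, -c * v / ε] with hgdef
    have hgdet : g.det = 1 := by
      rw [hgdef, Matrix.det_fin_two_of]
      field_simp
      linear_combination hvv
    have hg0 : IsUnit g.det := by rw [hgdet]; exact isUnit_one
    refine ⟨g, hgdet, ?_⟩
    have hXg : !![a, b; c, -a] * g = g * !![0, ε; -ε, 0] := by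
      rw [hgdef]
      ext i j
      fin_cases i <;> fin_cases j <;>
        simp [Matrix.mul_apply, Fin.sum_univ_two] <;>
        field_simp <;>
        first
        | ring1
        | linear_combination v * hdet'
    calc !![a, b; c, -a] = !![a, b; c, -a] * (g * g⁻¹) := by
          rw [Matrix.mul_nonsing_inv g hg0, Matrix.mul_one]
      _ = g * !![0, ε; -ε, 0] * g⁻¹ := by rw [← Matrix.mul_assoc, hXg]
end

section
/- The image of the map μ : ℝ² → sl(2,ℝ) given by μ(q,p) = [[qp, −q²],[p², −qp]] is exactly the set of trace-zero real 2×2 matrices X with X² = 0, X₁₂ ≤ 0 and X₂₁ ≥ 0. In particular this image is the closure of a single nonzero square-zero SL(2,ℝ)-conjugation orbit together with 0. -/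
theorem stmt_15 :
    (Set.range fun qp : ℝ × ℝ =>
        (!![qp.1 * qp.2, -qp.1 ^ 2; qp.2 ^ 2, -(qp.1 * qp.2)] : Matrix (Fin 2) (Fin 2) ℝ)) =
      {X : Matrix (Fin 2) (Fin 2) ℝ |
        X.trace = 0 ∧ X * X = 0 ∧ X 0 1 ≤ 0 ∧ 0 ≤ X 1 0} := by
  ext X
  constructor
  · rintro ⟨⟨q, p⟩, rfl⟩
    refine ⟨?_, ?_, ?_, ?_⟩
    · simp [Matrix.trace_fin_two]
    · ext i j
      fin_cases i <;> fin_cases j <;>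
        simp [Matrix.mul_apply, Fin.sum_univ_two] <;> ring
    · simp [sq_nonneg]
    · simp [sq_nonneg]
  · rintro ⟨htr, hsq, hb, hc⟩
    have hd : X 1 1 = -X 0 0 := by
      rw [Matrix.trace_fin_two] at htr; linarith
    have habc : X 0 0 ^ 2 + X 0 1 * X 1 0 = 0 := by
      have := congrFun (congrFun hsq 0) 0
      simp [Matrix.mul_apply, Fin.sum_univ_two] at this
      nlinarith [this]
    refine ⟨((if 0 ≤ X 0 0 then 1 else -1) * Real.sqrt (-X 0 1), Real.sqrt (X 1 0)), ?_⟩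
    have hq2 : Real.sqrt (-X 0 1) ^ 2 = -X 0 1 := Real.sq_sqrt (by linarith)
    have hp2 : Real.sqrt (X 1 0) ^ 2 = X 1 0 := Real.sq_sqrt hc
    have hqp : (if 0 ≤ X 0 0 then Real.sqrt (-X 0 1) * Real.sqrt (X 1 0)
        else -(Real.sqrt (-X 0 1) * Real.sqrt (X 1 0))) = X 0 0 := by
      have h1 : Real.sqrt (-X 0 1) * Real.sqrt (X 1 0) = Real.sqrt (-X 0 1 * X 1 0) :=
        (Real.sqrt_mul (by linarith) _).symm
      have h2 : -X 0 1 * X 1 0 = X 0 0 ^ 2 := by linarith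
      rw [h1, h2, Real.sqrt_sq_eq_abs]
      split_ifs with h
      · exact abs_of_nonneg h
      · push_neg at h
        rw [abs_of_neg h]; ring
    ext i j
    fin_cases i <;> fin_cases j <;>
      simp [hqp, hq2, hp2, hd]
end
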